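/- Let G be a directed graph with an injective ranking r : V → ℕ, and let s, t, h be vertices such that paths from s to h and from h to t exist and sd_G(s,h) + sd_G(h,t) = sd_G(s,t). Then N_h(s,t) = N_h(s,h) · N_h(h,t): the shortest paths from s to t whose maximum-rank vertex is h are in bijection with pairs consisting of a shortest path from s to h with maximum-rank vertex h and a shortest path from h to t with maximum-rank vertex h, via concatenation at h. (This justifies evaluating the shortest path count as the product of the counts stored in the out-label of s and the in-label of t at their common hub h.) -/

import Mathlib

open Classical

/-- `p` is a path from `s` to `t` in the directed graph with edge relation `E`:
`p` is the list of visited vertices, starting at `s`, ending at `t`, and every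
consecutive pair of vertices is an edge. -/
def IsWalk {V : Type*} (E : V → V → Prop) (s t : V) (p : List V) : Prop :=
  p.Chain' E ∧ p.head? = some s ∧ p.getLast? = some t

/-- The length of a path given by its vertex list `p`, i.e. its number of edges. -/
def walkLen {V : Type*} (p : List V) : ℕ := p.length - 1

/-- A path from `s` to `t` exists. -/
def Reach {V : Type*} (E : V → V → Prop) (s t : V) : Prop := ∃ p, IsWalk E s t p

/-- The shortest distance from `s` to `t`: the minimum length of a path from `s` to `t`. -/
noncomputable def sd {V : Type*} (E : V → V → Prop) (s t : V) : ℕ :=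
  sInf {n | ∃ p, IsWalk E s t p ∧ walkLen p = n}

/-- The set of shortest paths from `s` to `t`. -/
noncomputable def ShortestPaths {V : Type*} (E : V → V → Prop) (s t : V) : Set (List V) :=
  {p | IsWalk E s t p ∧ walkLen p = sd E s t}

/-- The number of shortest paths from `s` to `t`. -/
noncomputable def SPCnt {V : Type*} (E : V → V → Prop) (s t : V) : ℕ :=
  (ShortestPaths E s t).ncard

/-- The path `p` traverses the edge `(a, b)`: some consecutive pair of its vertices is `(a, b)`. -/
def Traverses {V : Type*} (p : List V) (a b : V) : Prop := (a, b) ∈ p.zip p.tail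

/-- `Nhub E r h s t` is the number of shortest paths from `s` to `t` whose
maximum-rank vertex (w.r.t. the ranking `r`) is `h`. -/
noncomputable def Nhub {V : Type*} (E : V → V → Prop) (r : V → ℕ) (h s t : V) : ℕ :=
  {p ∈ ShortestPaths E s t | h ∈ p ∧ ∀ x ∈ p, r x ≤ r h}.ncard


open List

section aux
variable {V : Type*} {E : V → V → Prop} {s t h : V} {p : List V}

lemma walk_ne_nil (hw : IsWalk E s t p) : p ≠ [] := by
  rintro rfl; simp [IsWalk] at hw

lemma walk_len (hw : IsWalk E s t p) : p.length = walkLen p + 1 := by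
  have h1 : 0 < p.length := List.length_pos_iff.2 (walk_ne_nil hw)
  simp only [walkLen]; omega

lemma sd_le' (hw : IsWalk E s t p) : sd E s t ≤ walkLen p :=
  Nat.sInf_le ⟨p, hw, rfl⟩

lemma join_walk {p₁ p₂ : List V} (h₁ : IsWalk E s h p₁) (h₂ : IsWalk E h t p₂) :
    IsWalk E s t (p₁ ++ p₂.tail) ∧ walkLen (p₁ ++ p₂.tail) = walkLen p₁ + walkLen p₂ := by
  obtain ⟨c₁, hh₁, hl₁⟩ := h₁
  obtain ⟨c₂, hh₂, hl₂⟩ := h₂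
  have hp₂ : p₂ = h :: p₂.tail := by
    cases p₂ with
    | nil => simp at hh₂
    | cons a l => simp_all
  have hc₂ := isChain_cons.1 (hp₂ ▸ c₂)
  refine ⟨⟨c₁.append hc₂.2 ?_, ?_, ?_⟩, ?_⟩
  · intro x hx y hy
    rw [hl₁, Option.mem_some_iff] at hx; subst hx
    exact hc₂.1 y hy
  · rw [head?_append_of_ne_nil _ (walk_ne_nil ⟨c₁, hh₁, hl₁⟩)]; exact hh₁
  · rcases eq_or_ne p₂.tail [] with he | he
    · rw [he, append_nil, hl₁]
      rw [hp₂, he] at hl₂; simp at hl₂; rw [hl₂]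
    · rw [getLast?_append_of_ne_nil _ he, ← hl₂, hp₂, List.tail_cons, getLast?_cons]
      cases hq : p₂.tail.getLast? with
      | none => exact absurd (List.getLast?_eq_none_iff.1 hq) he
      | some a => simp
  · have e1 : p₁.length = walkLen p₁ + 1 := walk_len ⟨c₁, hh₁, hl₁⟩
    have e2 : p₂.length = walkLen p₂ + 1 := walk_len ⟨c₂, hh₂, hl₂⟩
    have e3 : p₂.tail.length = p₂.length - 1 := List.length_tail (l := _)
    simp only [walkLen, List.length_append]
    omega

lemma split_walk (hw : IsWalk E s t p) {i : ℕ} (hi : i < p.length) (hh : p[i]? = some h) :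
    IsWalk E s h (p.take (i+1)) ∧ IsWalk E h t (p.drop i) ∧
    walkLen (p.take (i+1)) = i ∧ walkLen (p.drop i) = p.length - 1 - i := by
  obtain ⟨c, hhd, hlt⟩ := hw
  have hlen : (p.take (i+1)).length = i + 1 := by
    rw [List.length_take]; omega
  refine ⟨⟨c.take _, ?_, ?_⟩, ⟨c.drop _, ?_, ?_⟩, ?_, ?_⟩
  · rw [head?_take]; simpa using hhd
  · rw [getLast?_eq_getElem?, hlen]
    simpa [List.getElem?_take] using hh
  · rw [head?_drop]; exact hh
  · rw [getLast?_drop, if_neg (by omega)]; exact hlt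
  · simp only [walkLen, hlen]; omega
  · simp only [walkLen, List.length_drop]; omega

end aux

/-- If `sd(s,h) + sd(h,t) = sd(s,t)`, then the number of shortest paths from `s`
to `t` whose maximum-rank vertex is `h` is the product of the corresponding counts
from `s` to `h` and from `h` to `t`. -/
theorem stmt_15 {V : Type*} [Fintype V] (E : V → V → Prop) (hE : ∀ v, ¬ E v v)
    (r : V → ℕ) (hr : Function.Injective r) (s t h : V)
    (hsh : Reach E s h) (hht : Reach E h t)
    (hsd : sd E s h + sd E h t = sd E s t) :
    Nhub E r h s t = Nhub E r h s h * Nhub E r h h t := by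
  classical
  set A := {p ∈ ShortestPaths E s h | h ∈ p ∧ ∀ x ∈ p, r x ≤ r h} with hA
  set B := {p ∈ ShortestPaths E h t | h ∈ p ∧ ∀ x ∈ p, r x ≤ r h} with hB
  set C := {p ∈ ShortestPaths E s t | h ∈ p ∧ ∀ x ∈ p, r x ≤ r h} with hC
  have himg : C = (fun q : List V × List V => q.1 ++ q.2.tail) '' (A ×ˢ B) := by
    ext p
    constructor
    · rintro ⟨⟨hw, hlen⟩, hmem, hrank⟩
      obtain ⟨i, hi, hih⟩ := List.mem_iff_getElem.1 hmem
      have hih' : p[i]? = some h := by rw [List.getElem?_eq_getElem hi, hih]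
      obtain ⟨w1, w2, l1, l2⟩ := split_walk hw hi hih'
      have hplen : p.length = walkLen p + 1 := walk_len hw
      have hle1 := sd_le' w1
      have hle2 := sd_le' w2
      have e1 : walkLen (p.take (i+1)) = sd E s h := by omega
      have e2 : walkLen (p.drop i) = sd E h t := by omega
      refine ⟨(p.take (i+1), p.drop i), ⟨⟨⟨w1, e1⟩, ?_, ?_⟩, ⟨⟨w2, e2⟩, ?_, ?_⟩⟩, ?_⟩
      · refine List.mem_iff_getElem.2 ⟨i, ?_, ?_⟩
        · rw [List.length_take]; omega
        · simp [List.getElem_take, hih]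
      · exact fun x hx => hrank x (List.mem_of_mem_take hx)
      · exact List.mem_of_mem_head? (by rw [w2.2.1]; rfl)
      · exact fun x hx => hrank x (List.mem_of_mem_drop hx)
      · show p.take (i+1) ++ (p.drop i).tail = p
        rw [List.tail_drop, List.take_append_drop]
    · rintro ⟨⟨p₁, p₂⟩, ⟨⟨⟨w1, l1⟩, m1, r1⟩, ⟨⟨w2, l2⟩, m2, r2⟩⟩, rfl⟩
      obtain ⟨wj, lj⟩ := join_walk w1 w2
      refine ⟨⟨wj, by rw [lj, l1, l2, hsd]⟩, List.mem_append_left _ m1, ?_⟩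
      intro x hx
      rcases List.mem_append.1 hx with hx | hx
      · exact r1 x hx
      · exact r2 x (List.mem_of_mem_tail hx)
  have hinj : Set.InjOn (fun q : List V × List V => q.1 ++ q.2.tail) (A ×ˢ B) := by
    rintro ⟨p₁, p₂⟩ ⟨⟨⟨w1, l1⟩, -, -⟩, ⟨w2, l2⟩, -, -⟩ ⟨q₁, q₂⟩ ⟨⟨⟨u1, k1⟩, -, -⟩, ⟨u2, k2⟩, -, -⟩ heq
    simp only at heq
    have len1 : p₁.length = q₁.length := by
      rw [walk_len w1, walk_len u1, l1, k1]
    obtain ⟨e1, e2⟩ := List.append_inj heq len1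
    have hp₂c : p₂ = h :: p₂.tail := by
      cases p₂ with
      | nil => simp [IsWalk] at w2
      | cons a l =>
          obtain ⟨-, hh2, -⟩ := w2
          simp only [List.head?_cons, Option.some.injEq] at hh2
          rw [List.tail_cons, hh2]
    have hq₂c : q₂ = h :: q₂.tail := by
      cases q₂ with
      | nil => simp [IsWalk] at u2
      | cons a l =>
          obtain ⟨-, hh2, -⟩ := u2
          simp only [List.head?_cons, Option.some.injEq] at hh2
          rw [List.tail_cons, hh2]
    refine Prod.ext e1 ?_
    rw [hp₂c, hq₂c, e2]
  show C.ncard = A.ncard * B.ncard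
  rw [himg, Set.ncard_image_of_injOn hinj,
    ← Nat.card_coe_set_eq, ← Nat.card_coe_set_eq, ← Nat.card_coe_set_eq,
    Nat.card_congr (Equiv.Set.prod A B), Nat.card_prod]
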